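/- Let e = e₁ + e₃ ∈ A₂. Then the corner algebra eA₂e (the ring eA₂e with unit e and operations induced from A₂) is 4-dimensional over k and is isomorphic as a k-algebra to the path algebra of the Kronecker quiver, that is, to the quotient of the free associative k-algebra on generators f₁, f₂, x, y by the relations f₁² = f₁, f₂² = f₂, f₁f₂ = f₂f₁ = 0, f₁ + f₂ = 1, x = f₂xf₁, y = f₂yf₁. -/

import Mathlib

/-! The gentle algebra `A₂` of Kalck's paper, defined by generators and relations. -/

/-- Generators of the algebra `A₂`: three idempotents `e₁, e₂, e₃` and
arrows `β, γ : 3 → 1`, `α₂ : 1 → 2`, `α₁ : 2 → 3`. -/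
inductive A2Gen : Type
  | e : Fin 3 → A2Gen
  | β : A2Gen
  | γ : A2Gen
  | α₁ : A2Gen
  | α₂ : A2Gen
  deriving DecidableEq

variable (k : Type*) [Field k]

open FreeAlgebra

/-- Defining relations of the algebra `A₂`. -/
inductive A2Rel : FreeAlgebra k A2Gen → FreeAlgebra k A2Gen → Prop
  | orth (i j : Fin 3) :
      A2Rel (ι k (A2Gen.e i) * ι k (A2Gen.e j)) (if i = j then ι k (A2Gen.e i) else 0)
  | sum : A2Rel (ι k (A2Gen.e 0) + ι k (A2Gen.e 1) + ι k (A2Gen.e 2)) 1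
  | beta : A2Rel (ι k (A2Gen.e 0) * ι k A2Gen.β * ι k (A2Gen.e 2)) (ι k A2Gen.β)
  | gamma : A2Rel (ι k (A2Gen.e 0) * ι k A2Gen.γ * ι k (A2Gen.e 2)) (ι k A2Gen.γ)
  | alpha₂ : A2Rel (ι k (A2Gen.e 1) * ι k A2Gen.α₂ * ι k (A2Gen.e 0)) (ι k A2Gen.α₂)
  | alpha₁ : A2Rel (ι k (A2Gen.e 2) * ι k A2Gen.α₁ * ι k (A2Gen.e 1)) (ι k A2Gen.α₁)
  | rel₁ : A2Rel (ι k A2Gen.α₂ * ι k A2Gen.β) 0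
  | rel₂ : A2Rel (ι k A2Gen.γ * ι k A2Gen.α₁) 0
  | rel₃ : A2Rel (ι k A2Gen.α₁ * ι k A2Gen.α₂) 0

/-- The gentle algebra `A₂ = kQ₂/I₂`. -/
abbrev A2 : Type _ := RingQuot (A2Rel k)

namespace A2

/-- The image of a generator in `A₂`. -/
def gen (g : A2Gen) : A2 k := RingQuot.mkAlgHom k (A2Rel k) (ι k g)

/-- The idempotent `eᵢ` of `A₂` (indexed by `i : Fin 3`, so `e₁ = ee 0` etc). -/
def ee (i : Fin 3) : A2 k := gen k (A2Gen.e i)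

/-- The algebra homomorphism `A₂ → k` corresponding to the one-dimensional simple
module `Sᵢ`: the idempotent `eᵢ` acts as the identity, all other generators act by zero. -/
noncomputable def φ (i : Fin 3) : A2 k →ₐ[k] k :=
  RingQuot.liftAlgHom k
    ⟨FreeAlgebra.lift k (fun g => if g = A2Gen.e i then (1 : k) else 0), by
      rintro x y h
      induction h with
      | orth i' j' =>
          simp only [map_mul, apply_ite, map_zero, FreeAlgebra.lift_ι_apply]
          by_cases hij : i' = j'
          · subst hij; by_cases h : i' = i <;> simp [h]
          · by_cases h1 : i' = i <;> by_cases h2 : j' = i <;> simp_all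
      | sum => fin_cases i <;> simp
      | _ => simp⟩

/-- The simple left `A₂`-module `Sᵢ` (a type synonym for `k`). -/
def S (_i : Fin 3) : Type _ := k

noncomputable instance (i : Fin 3) : AddCommGroup (S k i) :=
  inferInstanceAs (AddCommGroup k)

noncomputable instance (i : Fin 3) : Module k (S k i) := inferInstanceAs (Module k k)

noncomputable instance (i : Fin 3) : Module (A2 k) (S k i) :=
  Module.compHom k (φ k i).toRingHom

end A2

namespace A2

variable {K : Type*} [Field K]

lemma rel_eq {x y : FreeAlgebra K A2Gen} (h : A2Rel K x y) :
    RingQuot.mkAlgHom K (A2Rel K) x = RingQuot.mkAlgHom K (A2Rel K) y :=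
  RingQuot.mkAlgHom_rel K h

lemma ee_mul_ee (i j : Fin 3) : ee K i * ee K j = if i = j then ee K i else 0 := by
  have := rel_eq (A2Rel.orth (k := K) i j)
  simpa [gen, ee, apply_ite, map_mul] using this

lemma idem_ee_add_ee {i j : Fin 3} (hij : i ≠ j) :
    (ee K i + ee K j) * (ee K i + ee K j) = ee K i + ee K j := by
  simp [mul_add, add_mul, ee_mul_ee, hij, hij.symm]

end A2

/-! The corner ring `eAe` of a ring `A` at an idempotent `e`:
the set `{eae : a ∈ A}`, with operations induced from `A` and unit `e`. -/

/-- An idempotent element of a ring, bundled with the proof of idempotency. -/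
structure Idem (A : Type*) [Ring A] where
  /-- the underlying element -/
  e : A
  /-- idempotency -/
  idem : e * e = e

variable {A : Type*} [Ring A]

/-- The corner `eAe` of the ring `A` at the idempotent `e`, as a type:
its elements are the `x : A` with `e * x * e = x`, i.e. exactly the elements
of the subset `eAe ⊆ A`. -/
def Corner (E : Idem A) : Type _ := {x : A // E.e * x * E.e = x}

namespace Corner

variable {E : Idem A}

instance : Add (Corner E) :=
  ⟨fun x y => ⟨x.1 + y.1, by rw [mul_add, add_mul, x.2, y.2]⟩⟩

instance : Zero (Corner E) := ⟨⟨0, by simp⟩⟩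

instance : Neg (Corner E) :=
  ⟨fun x => ⟨-x.1, by rw [mul_neg, neg_mul, x.2]⟩⟩

instance : Sub (Corner E) :=
  ⟨fun x y => ⟨x.1 - y.1, by rw [mul_sub, sub_mul, x.2, y.2]⟩⟩

instance : SMul ℕ (Corner E) :=
  ⟨fun n x => ⟨n • x.1, by rw [mul_smul_comm, smul_mul_assoc, x.2]⟩⟩

instance : SMul ℤ (Corner E) :=
  ⟨fun n x => ⟨n • x.1, by rw [mul_smul_comm, smul_mul_assoc, x.2]⟩⟩

private lemma aux_left {e x : A} (he : e * e = e) (hx : e * x * e = x) : e * x = x := by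
  conv_lhs => rw [← hx]
  rw [← mul_assoc, ← mul_assoc, he, hx]

private lemma aux_right {e x : A} (he : e * e = e) (hx : e * x * e = x) : x * e = x := by
  conv_lhs => rw [← hx]
  rw [mul_assoc, he, hx]

instance : Mul (Corner E) :=
  ⟨fun x y => ⟨x.1 * y.1, by
    rw [← mul_assoc, aux_left E.idem x.2, mul_assoc, aux_right E.idem y.2]⟩⟩

instance : One (Corner E) := ⟨⟨E.e, by rw [E.idem, E.idem]⟩⟩

instance : AddCommGroup (Corner E) :=
  Function.Injective.addCommGroup (fun x : Corner E => x.1) Subtype.val_injective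
    rfl (fun _ _ => rfl) (fun _ => rfl) (fun _ _ => rfl) (fun _ _ => rfl) (fun _ _ => rfl)

lemma e_mul_val (x : Corner E) : E.e * x.1 = x.1 := aux_left E.idem x.2

lemma val_mul_e (x : Corner E) : x.1 * E.e = x.1 := aux_right E.idem x.2

instance : Ring (Corner E) where
  __ := (inferInstance : AddCommGroup (Corner E))
  mul := (· * ·)
  one := 1
  mul_assoc x y z := Subtype.ext (mul_assoc x.1 y.1 z.1)
  one_mul x := Subtype.ext (e_mul_val x)
  mul_one x := Subtype.ext (val_mul_e x)
  left_distrib x y z := Subtype.ext (mul_add x.1 y.1 z.1)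
  right_distrib x y z := Subtype.ext (add_mul x.1 y.1 z.1)
  zero_mul x := Subtype.ext (zero_mul x.1)
  mul_zero x := Subtype.ext (mul_zero x.1)

section Algebra

variable {k : Type*} [CommSemiring k] [Algebra k A]

instance : SMul k (Corner E) :=
  ⟨fun c x => ⟨c • x.1, by rw [mul_smul_comm, smul_mul_assoc, x.2]⟩⟩

instance : Module k (Corner E) :=
  Function.Injective.module k
    ⟨⟨fun x : Corner E => x.1, rfl⟩, fun _ _ => rfl⟩
    Subtype.val_injective (fun _ _ => rfl)

instance : Algebra k (Corner E) :=
  Algebra.ofModule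
    (fun c x y => Subtype.ext (smul_mul_assoc c x.1 y.1))
    (fun c x y => Subtype.ext (mul_smul_comm c x.1 y.1))

end Algebra

end Corner

open FreeAlgebra

/-- Generators of the path algebra of the Kronecker quiver: two idempotents `f₁, f₂`
and two parallel arrows `x, y : 1 → 2`. -/
inductive KronGen : Type
  | f : Fin 2 → KronGen
  | x : KronGen
  | y : KronGen
  deriving DecidableEq

/-- Defining relations of the Kronecker algebra: `f₁, f₂` are orthogonal idempotents
with `f₁ + f₂ = 1`, and `x = f₂xf₁`, `y = f₂yf₁`. -/
inductive KronRel : FreeAlgebra k KronGen → FreeAlgebra k KronGen → Prop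
  | orth (i j : Fin 2) :
      KronRel (ι k (KronGen.f i) * ι k (KronGen.f j)) (if i = j then ι k (KronGen.f i) else 0)
  | sum : KronRel (ι k (KronGen.f 0) + ι k (KronGen.f 1)) 1
  | hx : KronRel (ι k (KronGen.f 1) * ι k KronGen.x * ι k (KronGen.f 0)) (ι k KronGen.x)
  | hy : KronRel (ι k (KronGen.f 1) * ι k KronGen.y * ι k (KronGen.f 0)) (ι k KronGen.y)

/-- The path algebra of the Kronecker quiver. -/
abbrev Kron : Type _ := RingQuot (KronRel k)

/-- The idempotent `e = e₁ + e₃` of `A₂`, bundled with its idempotency. -/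
noncomputable def A2.E13 : Idem (A2 k) :=
  ⟨A2.ee k 0 + A2.ee k 2, A2.idem_ee_add_ee (Fin.ne_of_val_ne (by simp))⟩

/-! Compression `a ↦ e a e` kills every path of `A₂` through vertex 2 and fixes `e₁, e₃, β, γ`.
Checked on the nine paths spanning `A₂`, this shows that it agrees with `A₂ → Kron → eA₂e`:
the first map kills `e₂, α₁, α₂`, and the second sends the generators back to
`e₃, e₁, β, γ`. So `Kron → eA₂e` is surjective. It is also injective, because `A₂ → Kron`
restricted to `eA₂e` is a left inverse. `Kron` is spanned by the images of the paths, i.e. by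
`f₁, f₂, x, y`, and a faithful representation on `k³` shows that these four are independent. -/

section SpanCriterion

variable {R B : Type*} [CommSemiring R] [Semiring B] [Algebra R B]

theorem Submodule.span_eq_top_of_mul_mem {s t : Set B} (ht : Algebra.adjoin R t = ⊤)
    (h1 : (1 : B) ∈ span R s) (hmul : ∀ g ∈ t, ∀ b ∈ s, g * b ∈ span R s) :
    span R s = ⊤ := by
  have key : ∀ a x, x ∈ span R s → a * x ∈ span R s := by
    intro a
    induction (ht ▸ Algebra.mem_top : a ∈ Algebra.adjoin R t) using
      Algebra.adjoin_induction with
    | mem g hg =>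
      intro x hx
      induction hx using span_induction with
      | mem b hb => exact hmul g hg b hb
      | zero => simp
      | add x y _ _ hx hy => rw [mul_add]; exact add_mem hx hy
      | smul c x _ hx => rw [mul_smul_comm]; exact smul_mem _ c hx
    | algebraMap r => intro x hx; rw [← Algebra.smul_def]; exact smul_mem _ r hx
    | add a b _ _ ha hb => intro x hx; rw [add_mul]; exact add_mem (ha x hx) (hb x hx)
    | mul a b _ _ ha hb => intro x hx; rw [mul_assoc]; exact ha _ (hb x hx)
  exact eq_top_iff'.2 fun a => by simpa using key a 1 h1

theorem RingQuot.adjoin_range_mkAlgHom_ι {X : Type*}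
    (r : FreeAlgebra R X → FreeAlgebra R X → Prop) :
    Algebra.adjoin R (Set.range fun g => mkAlgHom R r (FreeAlgebra.ι R g)) = ⊤ := by
  rw [Set.range_comp' (mkAlgHom R r), ← AlgHom.map_adjoin, FreeAlgebra.adjoin_range_ι,
    Algebra.map_top, AlgHom.range_eq_top]
  exact mkAlgHom_surjective R r

end SpanCriterion

namespace Corner

variable {R : Type*} [CommSemiring R] [Algebra R A] {E : Idem A}

@[simp] theorem val_zero : (0 : Corner E).1 = 0 := rfl

@[simp] theorem val_add (x y : Corner E) : (x + y).1 = x.1 + y.1 := rfl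

@[simp] theorem val_mul (x y : Corner E) : (x * y).1 = x.1 * y.1 := rfl

@[simp] theorem val_one : (1 : Corner E).1 = E.e := rfl

variable (R E) in
def compress : A →ₗ[R] Corner E where
  toFun a := ⟨E.e * a * E.e, by simp only [← mul_assoc, E.idem]; simp only [mul_assoc, E.idem]⟩
  map_add' a b := Subtype.ext (by simp only [mul_add, add_mul]; rfl)
  map_smul' c a := Subtype.ext (by simp only [mul_smul_comm, smul_mul_assoc]; rfl)

@[simp] theorem val_compress (a : A) : (compress R E a).1 = E.e * a * E.e := rfl

@[simp] theorem compress_val (z : Corner E) : compress R E z.1 = z := Subtype.ext z.2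

end Corner

namespace AlgHom

variable {R B : Type*} [CommSemiring R] [Algebra R A] [Semiring B] [Algebra R B] {E : Idem A}

def restrictCorner (f : A →ₐ[R] B) (hf : f E.e = 1) : Corner E →ₐ[R] B where
  toFun z := f z.1
  map_one' := hf
  map_mul' z w := map_mul f z.1 w.1
  map_zero' := map_zero f
  map_add' z w := map_add f z.1 w.1
  commutes' c := by
    change f (c • E.e) = algebraMap R B c
    rw [map_smul, hf, Algebra.algebraMap_eq_smul_one]

@[simp] theorem restrictCorner_apply (f : A →ₐ[R] B) (hf : f E.e = 1) (z : Corner E) :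
    f.restrictCorner hf z = f z.1 := rfl

theorem restrictCorner_compress (f : A →ₐ[R] B) (hf : f E.e = 1) (a : A) :
    f.restrictCorner hf (Corner.compress R E a) = f a := by
  simp [hf]

end AlgHom

namespace A2Gen

-- Reducible, so that `decide` and `simp` see through them, also inside `Decidable` instances.
abbrev source : A2Gen → Fin 3
  | e i => i
  | β | γ => 2
  | α₁ => 1
  | α₂ => 0

abbrev target : A2Gen → Fin 3
  | e i => i
  | β | γ => 0
  | α₁ => 2
  | α₂ => 1

end A2Gen

namespace A2

open A2Gen

variable {K : Type*} [Field K]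

theorem gen_e_mul_gen_e (i j : Fin 3) :
    gen K (e i) * gen K (e j) = if i = j then gen K (e i) else 0 :=
  ee_mul_ee i j

theorem gen_e_target_mul_gen_mul_gen_e_source (g : A2Gen) :
    gen K (e g.target) * gen K g * gen K (e g.source) = gen K g := by
  cases g with
  | e i => simp only [target, source, gen_e_mul_gen_e, if_pos]
  | β => simpa [gen] using RingQuot.mkAlgHom_rel K (A2Rel.beta (k := K))
  | γ => simpa [gen] using RingQuot.mkAlgHom_rel K (A2Rel.gamma (k := K))
  | α₁ => simpa [gen] using RingQuot.mkAlgHom_rel K (A2Rel.alpha₁ (k := K))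
  | α₂ => simpa [gen] using RingQuot.mkAlgHom_rel K (A2Rel.alpha₂ (k := K))

theorem gen_e_mul_gen (i : Fin 3) (g : A2Gen) :
    gen K (e i) * gen K g = if i = g.target then gen K g else 0 := by
  conv_lhs => rw [← gen_e_target_mul_gen_mul_gen_e_source g, ← mul_assoc, ← mul_assoc,
    gen_e_mul_gen_e]
  split_ifs with h
  · subst h; exact gen_e_target_mul_gen_mul_gen_e_source g
  · rw [zero_mul, zero_mul]

theorem gen_mul_gen_e (g : A2Gen) (i : Fin 3) :
    gen K g * gen K (e i) = if g.source = i then gen K g else 0 := by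
  conv_lhs => rw [← gen_e_target_mul_gen_mul_gen_e_source g, mul_assoc, gen_e_mul_gen_e]
  split_ifs with h
  · subst h; exact gen_e_target_mul_gen_mul_gen_e_source g
  · rw [mul_zero]

theorem gen_mul_gen_of_ne {g h : A2Gen} (hgh : g.source ≠ h.target) :
    gen K g * gen K h = 0 := by
  calc gen K g * gen K h = gen K g * gen K (e g.source) * (gen K (e h.target) * gen K h) := by
        rw [gen_mul_gen_e, gen_e_mul_gen, if_pos rfl, if_pos rfl]
    _ = 0 := by
      rw [mul_assoc, ← mul_assoc (gen K (e _)), gen_e_mul_gen_e, if_neg hgh, zero_mul, mul_zero]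

theorem gen_α₂_mul_gen_β : gen K α₂ * gen K β = 0 := by
  simpa [gen] using RingQuot.mkAlgHom_rel K (A2Rel.rel₁ (k := K))

theorem gen_γ_mul_gen_α₁ : gen K γ * gen K α₁ = 0 := by
  simpa [gen] using RingQuot.mkAlgHom_rel K (A2Rel.rel₂ (k := K))

theorem gen_α₁_mul_gen_α₂ : gen K α₁ * gen K α₂ = 0 := by
  simpa [gen] using RingQuot.mkAlgHom_rel K (A2Rel.rel₃ (k := K))

theorem gen_e_add_gen_e_add_gen_e : gen K (e 0) + gen K (e 1) + gen K (e 2) = 1 := by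
  simpa [gen] using RingQuot.mkAlgHom_rel K (A2Rel.sum (k := K))

variable (K) in
def paths : Set (A2 K) :=
  Set.range (gen K) ∪ {gen K β * gen K α₁, gen K α₂ * gen K γ}

theorem span_paths : Submodule.span K (paths K) = ⊤ := by
  have hgen (g : A2Gen) : gen K g ∈ Submodule.span K (paths K) :=
    Submodule.subset_span (Or.inl ⟨g, rfl⟩)
  have hβα₁ : gen K β * gen K α₁ ∈ Submodule.span K (paths K) :=
    Submodule.subset_span (Or.inr (Or.inl rfl))
  have hα₂γ : gen K α₂ * gen K γ ∈ Submodule.span K (paths K) :=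
    Submodule.subset_span (Or.inr (Or.inr rfl))
  refine Submodule.span_eq_top_of_mul_mem (RingQuot.adjoin_range_mkAlgHom_ι _) ?_ ?_
  · rw [← gen_e_add_gen_e_add_gen_e]
    exact add_mem (add_mem (hgen _) (hgen _)) (hgen _)
  · rintro _ ⟨g, rfl⟩ b hb
    change gen K g * b ∈ _
    rcases hb with ⟨h, rfl⟩ | rfl | rfl <;> cases g <;> try cases h
    all_goals
      simp (disch := decide) [← mul_assoc, gen_e_mul_gen, gen_mul_gen_e, gen_α₂_mul_gen_β,
        gen_γ_mul_gen_α₁, gen_α₁_mul_gen_α₂, gen_mul_gen_of_ne, ite_mul, ite_mem, hgen, hβα₁, hα₂γ]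

theorem E13_e : (E13 K).e = gen K (e 0) + gen K (e 2) := rfl

theorem E13_mul_gen (g : A2Gen) : (E13 K).e * gen K g = if g.target = 1 then 0 else gen K g := by
  rw [E13_e, add_mul, gen_e_mul_gen, gen_e_mul_gen]
  generalize g.target = t
  fin_cases t <;> simp

theorem gen_mul_E13 (g : A2Gen) : gen K g * (E13 K).e = if g.source = 1 then 0 else gen K g := by
  rw [E13_e, mul_add, gen_mul_gen_e, gen_mul_gen_e]
  generalize g.source = t
  fin_cases t <;> simp

end A2

namespace Kron

open KronGen Matrix

variable {K : Type*} [Field K]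

variable (K) in
def gen (g : KronGen) : Kron K :=
  RingQuot.mkAlgHom K (KronRel K) (FreeAlgebra.ι K g)

theorem gen_f_mul_gen_f (i j : Fin 2) :
    gen K (f i) * gen K (f j) = if i = j then gen K (f i) else 0 := by
  simpa [gen, apply_ite] using RingQuot.mkAlgHom_rel K (KronRel.orth (k := K) i j)

theorem gen_f_add_gen_f : gen K (f 0) + gen K (f 1) = 1 := by
  simpa [gen] using RingQuot.mkAlgHom_rel K (KronRel.sum (k := K))

theorem gen_f_one_mul_gen_x_mul_gen_f_zero :
    gen K (f 1) * gen K x * gen K (f 0) = gen K x := by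
  simpa [gen] using RingQuot.mkAlgHom_rel K (KronRel.hx (k := K))

theorem gen_f_one_mul_gen_y_mul_gen_f_zero :
    gen K (f 1) * gen K y * gen K (f 0) = gen K y := by
  simpa [gen] using RingQuot.mkAlgHom_rel K (KronRel.hy (k := K))

variable (K) in
/-- The representation `k ⊕ k²` of the Kronecker quiver whose arrows are the two coordinate
embeddings `k → k²`. -/
noncomputable def toMatrix : Kron K →ₐ[K] Matrix (Fin 3) (Fin 3) K :=
  RingQuot.liftAlgHom K
    ⟨FreeAlgebra.lift K fun
      | f 0 => single 0 0 1
      | f 1 => single 1 1 1 + single 2 2 1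
      | x => single 1 0 1
      | y => single 2 0 1, by
      rintro _ _ (⟨i, j⟩ | _ | _ | _)
      · fin_cases i <;> fin_cases j <;>
          simp [add_mul, mul_add, single_mul_single_same, single_mul_single_of_ne]
      · ext a b
        fin_cases a <;> fin_cases b <;> simp [one_apply]
      all_goals simp [add_mul, single_mul_single_same, single_mul_single_of_ne]⟩

variable (K) in
def paths : Fin 4 → Kron K :=
  ![gen K (f 0), gen K (f 1), gen K x, gen K y]

theorem linearIndependent_paths : LinearIndependent K (paths K) := by
  refine LinearIndependent.of_comp (toMatrix K).toLinearMap ?_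
  rw [Fintype.linearIndependent_iff]
  intro c hc i
  have entry (a b : Fin 3) := congrFun₂ hc a b
  simp only [Fin.sum_univ_four, paths, toMatrix, gen, Function.comp_apply,
    AlgHom.coe_toLinearMap] at entry
  fin_cases i
  · simpa using entry 0 0
  · simpa using entry 1 1
  · simpa using entry 1 0
  · simpa using entry 2 0

end Kron

namespace A2

open A2Gen Corner

variable {K : Type*} [Field K]

variable (K) in
/-- Vertices `1, 3` of `Q₂` become the vertices `2, 1` of the Kronecker quiver; vertex `2` and
the arrows through it are sent to `0`. -/
noncomputable def toKronGen : A2Gen → Kron K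
  | e i => ![Kron.gen K (.f 1), 0, Kron.gen K (.f 0)] i
  | β => Kron.gen K .x
  | γ => Kron.gen K .y
  | α₁ | α₂ => 0

variable (K) in
noncomputable def toKron : A2 K →ₐ[K] Kron K :=
  RingQuot.liftAlgHom K
    ⟨FreeAlgebra.lift K (toKronGen K), by
      rintro _ _ (⟨i, j⟩ | _ | _ | _ | _ | _ | _ | _ | _)
      · fin_cases i <;> fin_cases j <;> simp [toKronGen, Kron.gen_f_mul_gen_f]
      · simpa [toKronGen, add_comm] using Kron.gen_f_add_gen_f (K := K)
      · simpa [toKronGen] using Kron.gen_f_one_mul_gen_x_mul_gen_f_zero (K := K)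
      · simpa [toKronGen] using Kron.gen_f_one_mul_gen_y_mul_gen_f_zero (K := K)
      all_goals simp [toKronGen]⟩

theorem toKron_gen (g : A2Gen) : toKron K (gen K g) = toKronGen K g := by
  simp [toKron, gen]

theorem toKron_E13 : toKron K (E13 K).e = 1 := by
  simpa [E13_e, toKron_gen, toKronGen, add_comm] using Kron.gen_f_add_gen_f (K := K)

variable (K) in
noncomputable def cornerToKron : Corner (E13 K) →ₐ[K] Kron K :=
  (toKron K).restrictCorner toKron_E13

variable (K) in
noncomputable def ofKronGen : KronGen → A2 K
  | .f i => ![gen K (e 2), gen K (e 0)] i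
  | .x => gen K β
  | .y => gen K γ

variable (K) in
noncomputable def toCorner : Kron K →ₐ[K] Corner (E13 K) :=
  RingQuot.liftAlgHom K
    ⟨FreeAlgebra.lift K fun g => compress K (E13 K) (ofKronGen K g), by
      rintro _ _ (⟨i, j⟩ | _ | _ | _) <;> apply Subtype.ext
      · fin_cases i <;> fin_cases j <;>
          simp [ofKronGen, E13_mul_gen, gen_mul_E13, gen_e_mul_gen, source, target]
      · simpa [ofKronGen, E13_mul_gen, gen_mul_E13, source, target] using
          (add_comm (gen K (e 2)) (gen K (e 0))).trans E13_e.symm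
      all_goals simp [ofKronGen, mul_assoc, E13_mul_gen, gen_mul_E13, gen_e_mul_gen,
        gen_mul_gen_e, source, target]⟩

theorem toCorner_gen (g : KronGen) :
    toCorner K (Kron.gen K g) = compress K (E13 K) (ofKronGen K g) := by
  simp [toCorner, Kron.gen]

theorem cornerToKron_comp_toCorner :
    (cornerToKron K).comp (toCorner K) = AlgHom.id K (Kron K) := by
  refine RingQuot.ringQuot_ext' _ _ _ (FreeAlgebra.hom_ext (funext fun g => ?_))
  change cornerToKron K (toCorner K (Kron.gen K g)) = Kron.gen K g
  rw [toCorner_gen, cornerToKron, AlgHom.restrictCorner_compress]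
  rcases g with (i | _ | _) <;> try fin_cases i
  all_goals simp [ofKronGen, toKron_gen, toKronGen]

theorem toCorner_toKron (a : A2 K) : toCorner K (toKron K a) = compress K (E13 K) a := by
  suffices (toCorner K).toLinearMap ∘ₗ (toKron K).toLinearMap = compress K (E13 K) from
    LinearMap.congr_fun this a
  refine LinearMap.ext_on span_paths ?_
  rintro _ (⟨g, rfl⟩ | rfl | rfl) <;> apply Subtype.ext
  · rcases g with (i | _ | _ | _ | _) <;> try fin_cases i
    all_goals simp [toKron_gen, toKronGen, toCorner_gen, ofKronGen, E13_mul_gen, gen_mul_E13,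
      source, target]
  · simp [toKron_gen, toKronGen, mul_assoc, gen_mul_E13, source]
  · simp [toKron_gen, toKronGen, ← mul_assoc, E13_mul_gen, target]

theorem toKron_surjective : Function.Surjective (toKron K) := fun w =>
  ⟨(toCorner K w).1, AlgHom.congr_fun cornerToKron_comp_toCorner w⟩

variable (K) in
noncomputable def cornerEquivKron : Corner (E13 K) ≃ₐ[K] Kron K :=
  AlgEquiv.ofAlgHom (cornerToKron K) (toCorner K) cornerToKron_comp_toCorner <|
    AlgHom.ext fun z => by simp [cornerToKron, toCorner_toKron]

end A2

namespace Kron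

variable {K : Type*} [Field K]

theorem span_range_paths : Submodule.span K (Set.range (paths K)) = ⊤ := by
  have hgen : ∀ g, gen K g ∈ Submodule.span K (Set.range (paths K)) := by
    rintro (i | _ | _)
    · fin_cases i
      exacts [Submodule.subset_span ⟨0, rfl⟩, Submodule.subset_span ⟨1, rfl⟩]
    exacts [Submodule.subset_span ⟨2, rfl⟩, Submodule.subset_span ⟨3, rfl⟩]
  rw [eq_top_iff, ← (LinearMap.range_eq_top (f := (A2.toKron K).toLinearMap)).2
    A2.toKron_surjective, LinearMap.range_eq_map, ← A2.span_paths, Submodule.map_span,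
    Submodule.span_le]
  rintro _ ⟨p, (⟨g, rfl⟩ | rfl | rfl), rfl⟩
  · rcases g with (i | _ | _ | _ | _) <;> try fin_cases i
    all_goals simp [A2.toKron_gen, A2.toKronGen, hgen]
  all_goals simp [A2.toKron_gen, A2.toKronGen]

theorem finrank_eq_four : Module.finrank K (Kron K) = 4 := by
  simpa using Module.finrank_eq_card_basis
    (Module.Basis.mk linearIndependent_paths span_range_paths.ge)

end Kron

/-- For `e = e₁ + e₃ ∈ A₂`, the corner algebra `eA₂e` is
4-dimensional over `k` and isomorphic, as a `k`-algebra, to the path algebra of the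
Kronecker quiver. -/
theorem stmt6 :
    Module.finrank k (Corner (A2.E13 k)) = 4 ∧
    Nonempty (Corner (A2.E13 k) ≃ₐ[k] Kron k) :=
  ⟨(A2.cornerEquivKron k).toLinearEquiv.finrank_eq.trans Kron.finrank_eq_four,
    ⟨A2.cornerEquivKron k⟩⟩
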